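/- Bound on the volume term in the proof of Theorem 1: With the notation of the context, define Λ₁ = c² Σ_{j ∈ ZMod N} ∫_0^h ( |φ_j′(s)·v_j(s)| + |ψ_j′(s)·w_j(s)| ) ds. Then Λ₁ ≤ 2√3 · (c/h) · max{(q_u−1)², q_v²} · (c²‖w‖² + ‖v‖²)^{1/2} · (c²‖φ‖² + ‖ψ‖²)^{1/2}. -/

import Mathlib

open Polynomial

namespace VolBound

open intervalIntegral MeasureTheory

lemma poly_iint (p : ℝ[X]) (a b : ℝ) :
    IntervalIntegrable (fun x => p.eval x) volume a b :=
  p.continuous.intervalIntegrable a b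

/-- integral over (-1,1) -/
noncomputable def J (p : ℝ[X]) : ℝ := ∫ x in (-1:ℝ)..1, p.eval x

lemma J_add (p q : ℝ[X]) : J (p + q) = J p + J q := by
  simp only [J, eval_add]
  exact integral_add (poly_iint p _ _) (poly_iint q _ _)

lemma J_smul (a : ℝ) (p : ℝ[X]) : J (C a * p) = a * J p := by
  simp only [J, eval_mul, eval_C]
  exact integral_const_mul a _

lemma J_zero : J 0 = 0 := by simp [J]

lemma J_sum {ι : Type*} (s : Finset ι) (f : ι → ℝ[X]) :
    J (∑ i ∈ s, f i) = ∑ i ∈ s, J (f i) := by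
  classical
  induction s using Finset.cons_induction with
  | empty => simp [J_zero]
  | cons i s hi ih => rw [Finset.sum_cons, J_add, ih, Finset.sum_cons]

lemma J_deriv (p : ℝ[X]) : J (derivative p) = p.eval 1 - p.eval (-1) := by
  unfold J
  exact integral_eq_sub_of_hasDerivAt (fun x _ => p.hasDerivAt x) (poly_iint _ _ _)

/-- integration by parts -/
lemma J_parts (p q : ℝ[X]) :
    J (p * derivative q) =
      p.eval 1 * q.eval 1 - p.eval (-1) * q.eval (-1) - J (derivative p * q) := by
  have h := J_deriv (p * q)
  rw [derivative_mul, J_add] at h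
  simp only [eval_mul] at h
  linarith

/-- `(x-1)^k (x+1)^k = (x^2-1)^k` -/
noncomputable def fk (k : ℕ) : ℝ[X] := ((X - 1) * (X + 1)) ^ k

/-- Legendre polynomial up to normalization (Rodrigues) -/
noncomputable def P (k : ℕ) : ℝ[X] := derivative^[k] (fk k)

lemma aux (k : ℕ) : ∀ m, m ≤ k → ∃ q : ℝ[X],
    derivative^[m] (fk k) = (X - 1) ^ (k - m) * (X + 1) ^ (k - m) * q ∧
    q.eval 1 = 2 ^ m * (k.descFactorial m : ℝ) ∧
    q.eval (-1) = (-2 : ℝ) ^ m * (k.descFactorial m : ℝ) := by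
  intro m
  induction m with
  | zero =>
    intro _
    refine ⟨1, ?_, by simp, by simp⟩
    simp [fk, mul_pow]
  | succ m ih =>
    intro hm
    obtain ⟨q, hq, h1, h2⟩ := ih (Nat.le_of_succ_le hm)
    set b := k - (m + 1) with hb
    have hkm : k - m = b + 1 := by omega
    refine ⟨C ((b : ℝ) + 1) * ((X + 1) * q + (X - 1) * q) + (X - 1) * (X + 1) * derivative q,
      ?_, ?_, ?_⟩
    · rw [Function.iterate_succ_apply', hq, hkm]
      simp only [derivative_mul, derivative_pow, derivative_add, derivative_sub,
        derivative_X, derivative_one, Nat.add_sub_cancel, Nat.cast_add, Nat.cast_one]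
      ring
    · have hd : (k.descFactorial (m + 1) : ℝ) = ((b : ℝ) + 1) * (k.descFactorial m : ℝ) := by
        rw [Nat.descFactorial_succ]
        have : k - m = b + 1 := hkm
        push_cast [this]
        ring
      simp only [eval_add, eval_mul, eval_C, eval_X, eval_one, eval_sub, h1, hd]
      ring
    · have hd : (k.descFactorial (m + 1) : ℝ) = ((b : ℝ) + 1) * (k.descFactorial m : ℝ) := by
        rw [Nat.descFactorial_succ]
        push_cast [hkm]
        ring
      simp only [eval_add, eval_mul, eval_C, eval_X, eval_one, eval_sub, h2, hd]
      ring

lemma eval_iter_deriv_one {k m : ℕ} (h : m < k) :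
    (derivative^[m] (fk k)).eval 1 = 0 := by
  obtain ⟨q, hq, -, -⟩ := aux k m h.le
  have : k - m ≠ 0 := by omega
  simp [hq, zero_pow this]

lemma eval_iter_deriv_neg_one {k m : ℕ} (h : m < k) :
    (derivative^[m] (fk k)).eval (-1) = 0 := by
  obtain ⟨q, hq, -, -⟩ := aux k m h.le
  have : k - m ≠ 0 := by omega
  simp [hq, zero_pow this]

lemma eval_P_one (k : ℕ) : (P k).eval 1 = 2 ^ k * (k.factorial : ℝ) := by
  obtain ⟨q, hq, h1, -⟩ := aux k k le_rfl
  simp [P, hq, h1, Nat.descFactorial_self]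

lemma eval_P_neg_one (k : ℕ) : (P k).eval (-1) = (-2 : ℝ) ^ k * (k.factorial : ℝ) := by
  obtain ⟨q, hq, -, h2⟩ := aux k k le_rfl
  simp [P, hq, h2, Nat.descFactorial_self]

lemma monic_fk (k : ℕ) : (fk k).Monic :=
  ((monic_X_sub_C (1:ℝ)).mul (monic_X_add_C (1:ℝ))).pow k

lemma natDegree_fk (k : ℕ) : (fk k).natDegree = 2 * k := by
  have h2 : ((X - 1) * (X + 1) : ℝ[X]).natDegree = 2 := by
    have h := Polynomial.Monic.natDegree_mul (monic_X_sub_C (1:ℝ)) (monic_X_add_C (1:ℝ))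
    simp only [C_1] at h
    rw [h, show ((X:ℝ[X]) - 1) = X - C 1 by simp, show ((X:ℝ[X]) + 1) = X + C 1 by simp,
      natDegree_X_sub_C, natDegree_X_add_C]
  have := Polynomial.Monic.natDegree_pow ((monic_X_sub_C (1:ℝ)).mul (monic_X_add_C (1:ℝ))) k
  simp only [C_1] at this
  rw [fk, this, h2, mul_comm]

lemma natDegree_P_le (k : ℕ) : (P k).natDegree ≤ k := by
  have := natDegree_iterate_derivative (fk k) k
  rw [natDegree_fk] at this
  simpa [P, two_mul] using this

lemma coeff_P_self (k : ℕ) : (P k).coeff k = ((2 * k).descFactorial k : ℝ) := by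
  have h := Polynomial.coeff_iterate_derivative (fk k) k (k := k)
  have hc : (fk k).coeff (k + k) = 1 := by
    have := (monic_fk k).coeff_natDegree
    rwa [natDegree_fk, two_mul] at this
  rw [P, h, hc]
  simp [two_mul]

-- integration by parts chain
lemma J_chain (k : ℕ) (q : ℝ[X]) : ∀ i, i ≤ k →
    J (q * P k) = (-1 : ℝ) ^ i * J (derivative^[i] q * derivative^[k - i] (fk k)) := by
  intro i
  induction i with
  | zero => intro _; simp [P]
  | succ i ih =>
    intro hi
    rw [ih (Nat.le_of_succ_le hi)]
    have hki : k - i = (k - (i + 1)) + 1 := by omega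
    have hsplit : derivative^[k - i] (fk k) = derivative (derivative^[k - (i+1)] (fk k)) := by
      rw [hki, Function.iterate_succ_apply']
    rw [hsplit, J_parts]
    rw [eval_iter_deriv_one (by omega), eval_iter_deriv_neg_one (by omega)]
    rw [← Function.iterate_succ_apply' derivative i q]
    ring

lemma orth_lower {k : ℕ} {q : ℝ[X]} (hq : q.natDegree < k) : J (q * P k) = 0 := by
  rw [J_chain k q k le_rfl, Polynomial.iterate_derivative_eq_zero hq]
  simp [J_zero]

lemma J_P_comm (j k : ℕ) : J (P j * P k) = J (P k * P j) := by rw [mul_comm]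

lemma orth {j k : ℕ} (h : j ≠ k) : J (P j * P k) = 0 := by
  rcases Nat.lt_or_ge j k with hlt | hge
  · exact orth_lower (lt_of_le_of_lt (natDegree_P_le j) hlt)
  · rw [J_P_comm]
    exact orth_lower (lt_of_le_of_lt (natDegree_P_le k) (by omega))

-- the norm of P k
noncomputable def Jg (k : ℕ) : ℝ := J ((1 - X ^ 2) ^ k)

lemma fk_eq_gk (k : ℕ) : fk k = C ((-1 : ℝ) ^ k) * (1 - X ^ 2) ^ k := by
  have : ((X - 1) * (X + 1) : ℝ[X]) = (-1) * (1 - X ^ 2) := by ring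
  rw [fk, this, mul_pow]
  congr 1
  rw [← C_1, ← C_neg, ← C_pow]

lemma J_one : J 1 = 2 := by
  have h := J_deriv (X : ℝ[X])
  rw [derivative_X] at h
  rw [h]; simp; norm_num

lemma Jg_zero : Jg 0 = 2 := by
  rw [Jg, pow_zero, J_one]

lemma Jg_succ (k : ℕ) : (2 * k + 3) * Jg (k + 1) = (2 * k + 2) * Jg k := by
  have hid : derivative ((X : ℝ[X]) * (1 - X ^ 2) ^ (k + 1)) =
      C (2 * (k:ℝ) + 3) * (1 - X ^ 2) ^ (k + 1) - C (2 * (k:ℝ) + 2) * (1 - X ^ 2) ^ k := by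
    rw [derivative_mul, derivative_pow, derivative_X]
    simp only [Nat.add_sub_cancel, derivative_sub, derivative_one, derivative_pow,
      derivative_X, Nat.cast_add, Nat.cast_one, map_add, map_mul, map_ofNat, map_one]
    rw [pow_succ]
    push_cast
    simp only [map_add, map_mul, map_one, map_ofNat]
    ring
  have h0 := J_deriv ((X : ℝ[X]) * (1 - X ^ 2) ^ (k + 1))
  have he : ((X : ℝ[X]) * (1 - X ^ 2) ^ (k + 1)).eval 1 = 0 := by
    simp [zero_pow (Nat.succ_ne_zero k)]
  have he' : ((X : ℝ[X]) * (1 - X ^ 2) ^ (k + 1)).eval (-1) = 0 := by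
    simp [zero_pow (Nat.succ_ne_zero k)]
  rw [hid, he, he'] at h0
  have hre : C (2 * (k:ℝ) + 3) * (1 - X ^ 2) ^ (k + 1) - C (2 * (k:ℝ) + 2) * (1 - X ^ 2) ^ k
      = C (2 * (k:ℝ) + 3) * (1 - X ^ 2) ^ (k + 1) + C (-(2 * (k:ℝ) + 2)) * (1 - X ^ 2) ^ k := by
    rw [map_neg]; ring
  rw [hre, J_add, J_smul, J_smul] at h0
  have h1 : (2 * (k:ℝ) + 3) * Jg (k + 1) - (2 * (k:ℝ) + 2) * Jg k = 0 := by
    rw [Jg, Jg]; linarith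
  push_cast
  linarith

lemma Jg_eq (k : ℕ) : Jg k = 2 ^ (2 * k + 1) * (k.factorial : ℝ) ^ 2 / ((2 * k + 1).factorial) := by
  induction k with
  | zero => simp [Jg_zero]
  | succ k ih =>
    have h := Jg_succ k
    have h3 : (0:ℝ) < 2 * (k:ℝ) + 3 := by positivity
    have hJ : Jg (k + 1) = (2 * k + 2) * Jg k / (2 * k + 3) := by
      field_simp at h ⊢; linarith
    rw [hJ, ih]
    have hf1 : ((2 * (k+1) + 1).factorial : ℝ)
        = (2 * (k:ℝ) + 3) * (2 * (k:ℝ) + 2) * ((2 * k + 1).factorial : ℝ) := by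
      have : 2 * (k+1) + 1 = (2 * k + 1) + 1 + 1 := by ring
      rw [this, Nat.factorial_succ, Nat.factorial_succ]
      push_cast; ring
    have hf2 : ((k+1).factorial : ℝ) = ((k:ℝ) + 1) * (k.factorial : ℝ) := by
      rw [Nat.factorial_succ]; push_cast; ring
    rw [hf1, hf2]
    have hfp : (0:ℝ) < ((2 * k + 1).factorial : ℝ) := by positivity
    field_simp
    ring
set_option maxHeartbeats 400000 in
lemma D2k_fk (k : ℕ) : derivative^[2 * k] (fk k) = C (((2 * k).factorial : ℝ)) := by
  have hdeg : (derivative^[2 * k] (fk k)).natDegree = 0 := by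
    have := natDegree_iterate_derivative (fk k) (2 * k)
    rw [natDegree_fk] at this
    omega
  have hco : (derivative^[2 * k] (fk k)).coeff 0 = ((2 * k).factorial : ℝ) := by
    rw [Polynomial.coeff_iterate_derivative]
    have hc : (fk k).coeff (0 + 2 * k) = 1 := by
      have := (monic_fk k).coeff_natDegree
      rwa [natDegree_fk, ← zero_add (2 * k)] at this
    rw [hc, zero_add, Nat.descFactorial_self]
    simp
  rw [Polynomial.eq_C_of_natDegree_le_zero hdeg.le, hco]

noncomputable def Nk (k : ℕ) : ℝ := J (P k * P k)

noncomputable def E (k : ℕ) : ℝ := 2 ^ k * (k.factorial : ℝ)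

lemma E_pos (k : ℕ) : 0 < E k := by
  unfold E; positivity

lemma J_fk (k : ℕ) : J (fk k) = (-1:ℝ)^k * Jg k := by
  rw [fk_eq_gk, J_smul, Jg]

lemma Nk_eq (k : ℕ) : Nk k = 2 * E k ^ 2 / (2 * k + 1) := by
  have h := J_chain k (P k) k le_rfl
  rw [Nat.sub_self, Function.iterate_zero_apply] at h
  have h2 : derivative^[k] (P k) = C (((2 * k).factorial : ℝ)) := by
    rw [P, ← Function.iterate_add_apply, ← two_mul, D2k_fk]
  have hone : (-1:ℝ)^k * (-1:ℝ)^k = 1 := by rw [← mul_pow]; norm_num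
  have hstep : Nk k = ((2 * k).factorial : ℝ) * Jg k := by
    rw [Nk, h, h2, J_smul, J_fk,
      show (-1:ℝ)^k * (((2*k).factorial:ℝ) * ((-1:ℝ)^k * Jg k))
        = ((-1:ℝ)^k * (-1:ℝ)^k) * (((2*k).factorial:ℝ) * Jg k) from by ring,
      hone, one_mul]
  rw [hstep, Jg_eq, E]
  have h1 : ((2 * k + 1).factorial : ℝ) = (2 * (k:ℝ) + 1) * ((2 * k).factorial : ℝ) := by
    rw [Nat.factorial_succ]; push_cast; ring
  have key : (2:ℝ) ^ (2 * k + 1) = 2 * ((2:ℝ) ^ k) ^ 2 := by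
    rw [pow_add, pow_one, mul_comm 2 k, pow_mul]; ring
  have hfp : (0:ℝ) < ((2 * k).factorial : ℝ) := by positivity
  have h2p : (0:ℝ) < 2 * (k:ℝ) + 1 := by positivity
  rw [h1, key]
  field_simp

lemma Nk_pos (k : ℕ) : 0 < Nk k := by
  rw [Nk_eq]
  have := E_pos k
  positivity

-- d j k = J (P j' * P k)
lemma d_eq_zero {j k : ℕ} (hjk : j ≤ k) : J (derivative (P j) * P k) = 0 := by
  rcases Nat.eq_zero_or_pos j with h0 | hpos
  · subst h0
    have : P 0 = 1 := by simp [P, fk]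
    rw [this, derivative_one, zero_mul, J_zero]
  · apply orth_lower
    calc (derivative (P j)).natDegree ≤ (P j).natDegree - 1 := natDegree_derivative_le _
    _ < k := by have := natDegree_P_le j; omega

lemma d_eq {j k : ℕ} (hkj : k < j) :
    J (derivative (P j) * P k) = E j * E k * (1 - (-1 : ℝ) ^ (j + k)) := by
  have hparts := J_parts (P k) (P j)
  have hz : J (derivative (P k) * P j) = 0 := d_eq_zero (by omega : k ≤ j)
  rw [hz, sub_zero] at hparts
  have hcomm : J (derivative (P j) * P k) = J (P k * derivative (P j)) := by rw [mul_comm]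
  rw [hcomm, hparts, eval_P_one, eval_P_one, eval_P_neg_one, eval_P_neg_one]
  have hneg : (-2 : ℝ) = (-1) * 2 := by norm_num
  rw [hneg, mul_pow, mul_pow]
  unfold E
  rw [pow_add]
  ring

lemma d_sq_le {j k : ℕ} (hkj : k < j) :
    J (derivative (P j) * P k) ^ 2 ≤ 4 * E j ^ 2 * E k ^ 2 := by
  rw [d_eq hkj]
  have h1 : (1 - (-1 : ℝ) ^ (j + k)) ^ 2 ≤ 4 := by
    rcases Nat.even_or_odd (j + k) with he | ho
    · rw [he.neg_one_pow]; norm_num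
    · rw [ho.neg_one_pow]; norm_num
  have h2 : (0:ℝ) ≤ E j ^ 2 * E k ^ 2 := by positivity
  calc (E j * E k * (1 - (-1:ℝ) ^ (j+k))) ^ 2
      = (E j ^2 * E k ^2) * (1 - (-1:ℝ)^(j+k))^2 := by ring
    _ ≤ (E j ^2 * E k ^2) * 4 := by exact mul_le_mul_of_nonneg_left h1 h2
    _ = 4 * E j ^2 * E k ^2 := by ring

-- span
lemma span (n : ℕ) : ∀ p : ℝ[X], p.natDegree ≤ n →
    ∃ a : ℕ → ℝ, p = ∑ j ∈ Finset.range (n + 1), C (a j) * P j := by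
  induction n with
  | zero =>
    intro p hp
    refine ⟨fun _ => p.coeff 0, ?_⟩
    have hP0 : P 0 = 1 := by simp [P, fk]
    rw [Finset.sum_range_one, hP0, mul_one]
    exact Polynomial.eq_C_of_natDegree_le_zero hp
  | succ n ih =>
    intro p hp
    set L : ℝ := ((2 * (n+1)).descFactorial (n+1) : ℝ) with hL
    have hLpos : (0:ℝ) < L := by
      rw [hL]
      have : (2 * (n+1)).descFactorial (n+1) ≠ 0 := by
        rw [Ne, Nat.descFactorial_eq_zero_iff_lt]; omega
      have hpos : 0 < (2 * (n+1)).descFactorial (n+1) := Nat.pos_of_ne_zero this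
      exact_mod_cast hpos
    set c : ℝ := p.coeff (n+1) / L with hc
    set q : ℝ[X] := p - C c * P (n+1) with hq
    have hqdeg : q.natDegree ≤ n := by
      rw [Polynomial.natDegree_le_iff_coeff_eq_zero]
      intro m hm
      rw [hq, Polynomial.coeff_sub, Polynomial.coeff_C_mul]
      rcases Nat.lt_or_ge (n+1) m with hgt | hge
      · rw [Polynomial.coeff_eq_zero_of_natDegree_lt (lt_of_le_of_lt hp hgt),
          Polynomial.coeff_eq_zero_of_natDegree_lt (lt_of_le_of_lt (natDegree_P_le (n+1)) hgt)]
        ring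
      · have hm1 : m = n + 1 := by omega
        rw [hm1, coeff_P_self, hc, ← hL, div_mul_cancel₀ _ hLpos.ne', sub_self]
    obtain ⟨a, ha⟩ := ih q hqdeg
    refine ⟨fun j => if j = n + 1 then c else a j, ?_⟩
    rw [Finset.sum_range_succ]
    simp only [eq_self_iff_true, if_true]
    have hsum : ∑ j ∈ Finset.range (n + 1), C (if j = n + 1 then c else a j) * P j
        = ∑ j ∈ Finset.range (n + 1), C (a j) * P j := by
      apply Finset.sum_congr rfl
      intro j hj
      rw [if_neg (by simp at hj; omega)]
    rw [hsum, ← ha, hq]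
    abel

-- coefficient extraction
lemma coeff_extract {n : ℕ} {a : ℕ → ℝ} {k : ℕ} (hk : k ∈ Finset.range (n+1)) :
    J ((∑ j ∈ Finset.range (n + 1), C (a j) * P j) * P k) = a k * Nk k := by
  rw [Finset.sum_mul, J_sum]
  rw [Finset.sum_eq_single k]
  · rw [mul_assoc, J_smul, Nk]
  · intro j hj hjk
    rw [mul_assoc, J_smul, orth hjk, mul_zero]
  · intro h; exact absurd hk h

-- sum of odd numbers
lemma sum_odds (m : ℕ) : ∑ k ∈ Finset.range m, (2 * (k:ℝ) + 1) = (m:ℝ) ^ 2 := by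
  induction m with
  | zero => simp
  | succ m ih => rw [Finset.sum_range_succ, ih]; push_cast; ring

lemma sum_odds_Ico {a b : ℕ} (hab : a ≤ b) :
    ∑ j ∈ Finset.Ico a b, (2 * (j:ℝ) + 1) = (b:ℝ) ^ 2 - (a:ℝ) ^ 2 := by
  rw [Finset.sum_Ico_eq_sub _ hab, sum_odds, sum_odds]

lemma key_combinatorial (n : ℕ) :
    ∑ k ∈ Finset.range (n + 1), (2 * (k:ℝ) + 1) * (((n:ℝ)+1) ^ 2 - ((k:ℝ)+1) ^ 2)
      ≤ 3 * (n:ℝ) ^ 4 := by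
  induction n with
  | zero => simp
  | succ n ih =>
    push_cast
    rw [Finset.sum_range_succ]
    have h1 : ∀ k ∈ Finset.range (n+1), (2*(k:ℝ)+1) * (((n:ℝ)+1+1)^2 - ((k:ℝ)+1)^2)
        = (2*(k:ℝ)+1)*(((n:ℝ)+1)^2 - ((k:ℝ)+1)^2)
          + (2*(k:ℝ)+1)*(((n:ℝ)+1+1)^2 - ((n:ℝ)+1)^2) := by
      intro k _; ring
    rw [Finset.sum_congr rfl h1, Finset.sum_add_distrib, ← Finset.sum_mul, sum_odds (n+1)]
    push_cast
    nlinarith [ih, sq_nonneg ((n:ℝ)), sq_nonneg ((n:ℝ)+1)]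

theorem inv_est (n : ℕ) (p : ℝ[X]) (hp : p.natDegree ≤ n) :
    J (derivative p * derivative p) ≤ 3 * (n:ℝ) ^ 4 * J (p * p) := by
  classical
  obtain ⟨a, ha⟩ := span n p hp
  -- Parseval-type identity
  have J_self : ∀ b : ℕ → ℝ,
      J ((∑ j ∈ Finset.range (n+1), C (b j) * P j) * (∑ j ∈ Finset.range (n+1), C (b j) * P j))
        = ∑ j ∈ Finset.range (n+1), (b j) ^ 2 * Nk j := by
    intro b
    rw [Finset.sum_mul (f := fun j => C (b j) * P j), J_sum]
    apply Finset.sum_congr rfl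
    intro j hj
    rw [show (C (b j) * P j) * (∑ i ∈ Finset.range (n+1), C (b i) * P i)
        = C (b j) * ((∑ i ∈ Finset.range (n+1), C (b i) * P i) * P j) from by ring,
      J_smul, coeff_extract hj]
    ring
  have hpp : J (p * p) = ∑ j ∈ Finset.range (n+1), (a j) ^ 2 * Nk j := by
    rw [ha]; exact J_self a
  have hpp_nonneg : 0 ≤ J (p * p) := by
    rw [hpp]
    apply Finset.sum_nonneg
    intro j _
    have := Nk_pos j
    positivity
  -- expand the derivative
  have hp'deg : (derivative p).natDegree ≤ n := (natDegree_derivative_le p).trans (by omega)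
  obtain ⟨g, hg⟩ := span n (derivative p) hp'deg
  have hdp : derivative p = ∑ j ∈ Finset.range (n+1), C (a j) * derivative (P j) := by
    conv_lhs => rw [ha]
    rw [derivative_sum]
    apply Finset.sum_congr rfl
    intro j _
    rw [derivative_C_mul]
  have hgk : ∀ k ∈ Finset.range (n+1),
      g k * Nk k = ∑ j ∈ Finset.Ico (k+1) (n+1), a j * J (derivative (P j) * P k) := by
    intro k hk
    have h1 : J (derivative p * P k) = g k * Nk k := by
      conv_lhs => rw [hg]
      exact coeff_extract hk
    have h2 : J (derivative p * P k)
        = ∑ j ∈ Finset.range (n+1), a j * J (derivative (P j) * P k) := by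
      conv_lhs => rw [hdp]
      rw [Finset.sum_mul, J_sum]
      apply Finset.sum_congr rfl
      intro j _
      rw [mul_assoc, J_smul]
    have h3 : ∑ j ∈ Finset.range (n+1), a j * J (derivative (P j) * P k)
        = ∑ j ∈ Finset.Ico (k+1) (n+1), a j * J (derivative (P j) * P k) := by
      symm
      apply Finset.sum_subset
      · intro x hx
        simp only [Finset.mem_Ico] at hx
        simp only [Finset.mem_range]
        omega
      · intro x hx hnx
        simp only [Finset.mem_range] at hx
        simp only [Finset.mem_Ico] at hnx
        have : x ≤ k := by omega
        rw [d_eq_zero this, mul_zero]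
    rw [← h1, h2, h3]
  -- per-k Cauchy-Schwarz bound
  have key : ∀ k ∈ Finset.range (n+1),
      (g k) ^ 2 * Nk k ≤ J (p * p) * ((2 * (k:ℝ) + 1) * (((n:ℝ)+1)^2 - ((k:ℝ)+1)^2)) := by
    intro k hk
    have hk' : k ≤ n := by simpa using Finset.mem_range_succ_iff.mp hk
    set S := Finset.Ico (k+1) (n+1) with hS
    have cs := Finset.sum_mul_sq_le_sq_mul_sq S
      (fun j => a j * Real.sqrt (Nk j))
      (fun j => J (derivative (P j) * P k) / Real.sqrt (Nk j))
    have hterm : ∀ j ∈ S, (a j * Real.sqrt (Nk j)) *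
        (J (derivative (P j) * P k) / Real.sqrt (Nk j)) = a j * J (derivative (P j) * P k) := by
      intro j _
      have hs : Real.sqrt (Nk j) ≠ 0 := by
        have := Nk_pos j
        positivity
      field_simp
    rw [Finset.sum_congr rfl hterm] at cs
    have hsq : ∀ j ∈ S, (a j * Real.sqrt (Nk j)) ^ 2 = (a j) ^ 2 * Nk j := by
      intro j _
      rw [mul_pow, Real.sq_sqrt (Nk_pos j).le]
    rw [Finset.sum_congr rfl hsq] at cs
    -- first factor ≤ J (p*p)
    have hfirst : ∑ j ∈ S, (a j) ^ 2 * Nk j ≤ J (p * p) := by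
      rw [hpp]
      apply Finset.sum_le_sum_of_subset_of_nonneg
      · intro x hx
        simp only [hS, Finset.mem_Ico] at hx
        simp only [Finset.mem_range]; omega
      · intro j _ _
        have := Nk_pos j
        positivity
    -- second factor
    have hsecond : ∑ j ∈ S, (J (derivative (P j) * P k) / Real.sqrt (Nk j)) ^ 2
        ≤ (2 * (k:ℝ) + 1) * Nk k * (((n:ℝ)+1)^2 - ((k:ℝ)+1)^2) := by
      have hterm2 : ∀ j ∈ S, (J (derivative (P j) * P k) / Real.sqrt (Nk j)) ^ 2
          ≤ (2 * (k:ℝ) + 1) * Nk k * (2 * (j:ℝ) + 1) := by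
        intro j hj
        simp only [hS, Finset.mem_Ico] at hj
        have hkj : k < j := by omega
        have hNj := Nk_pos j
        have hNk := Nk_pos k
        have hEk := E_pos k
        have hEj := E_pos j
        rw [div_pow, Real.sq_sqrt hNj.le]
        rw [div_le_iff₀ hNj]
        calc J (derivative (P j) * P k) ^ 2 ≤ 4 * E j ^ 2 * E k ^ 2 := d_sq_le hkj
          _ = (2 * (k:ℝ) + 1) * Nk k * (2 * (j:ℝ) + 1) * Nk j := by
              rw [Nk_eq j, Nk_eq k]
              have h2j : (2 * (j:ℝ) + 1) ≠ 0 := by positivity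
              have h2k : (2 * (k:ℝ) + 1) ≠ 0 := by positivity
              field_simp
              ring
      calc ∑ j ∈ S, (J (derivative (P j) * P k) / Real.sqrt (Nk j)) ^ 2
          ≤ ∑ j ∈ S, (2 * (k:ℝ) + 1) * Nk k * (2 * (j:ℝ) + 1) :=
            Finset.sum_le_sum hterm2
        _ = (2 * (k:ℝ) + 1) * Nk k * ∑ j ∈ S, (2 * (j:ℝ) + 1) := by
            rw [Finset.mul_sum]
        _ = (2 * (k:ℝ) + 1) * Nk k * (((n:ℝ)+1)^2 - ((k:ℝ)+1)^2) := by
            rw [hS, sum_odds_Ico (by omega), Nat.cast_add, Nat.cast_add, Nat.cast_one]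
    -- combine
    have hNk := Nk_pos k
    have hcs2 : (g k * Nk k) ^ 2 ≤ J (p * p) *
        ((2 * (k:ℝ) + 1) * Nk k * (((n:ℝ)+1)^2 - ((k:ℝ)+1)^2)) := by
      rw [← hgk k hk] at cs
      calc (g k * Nk k) ^ 2 ≤ (∑ j ∈ S, (a j)^2 * Nk j) *
            (∑ j ∈ S, (J (derivative (P j) * P k) / Real.sqrt (Nk j)) ^ 2) := cs
        _ ≤ J (p * p) * ((2 * (k:ℝ) + 1) * Nk k * (((n:ℝ)+1)^2 - ((k:ℝ)+1)^2)) := by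
            apply mul_le_mul hfirst hsecond
            · apply Finset.sum_nonneg; intro j _; positivity
            · exact hpp_nonneg
    have hgoal : (g k) ^ 2 * Nk k * Nk k ≤
        J (p * p) * ((2 * (k:ℝ) + 1) * (((n:ℝ)+1)^2 - ((k:ℝ)+1)^2)) * Nk k := by
      calc (g k) ^ 2 * Nk k * Nk k = (g k * Nk k) ^ 2 := by ring
        _ ≤ J (p * p) * ((2 * (k:ℝ) + 1) * Nk k * (((n:ℝ)+1)^2 - ((k:ℝ)+1)^2)) := hcs2
        _ = J (p * p) * ((2 * (k:ℝ) + 1) * (((n:ℝ)+1)^2 - ((k:ℝ)+1)^2)) * Nk k := by ring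
    exact le_of_mul_le_mul_right hgoal hNk
  -- sum up
  have hsum : J (derivative p * derivative p) = ∑ k ∈ Finset.range (n+1), (g k)^2 * Nk k := by
    conv_lhs => rw [hg]
    exact J_self g
  calc J (derivative p * derivative p)
      = ∑ k ∈ Finset.range (n+1), (g k)^2 * Nk k := hsum
    _ ≤ ∑ k ∈ Finset.range (n+1),
          J (p * p) * ((2 * (k:ℝ) + 1) * (((n:ℝ)+1)^2 - ((k:ℝ)+1)^2)) :=
        Finset.sum_le_sum key
    _ = J (p * p) * ∑ k ∈ Finset.range (n+1), (2 * (k:ℝ) + 1) * (((n:ℝ)+1)^2 - ((k:ℝ)+1)^2) := by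
        rw [Finset.mul_sum]
    _ ≤ J (p * p) * (3 * (n:ℝ)^4) :=
        mul_le_mul_of_nonneg_left (key_combinatorial n) hpp_nonneg
    _ = 3 * (n:ℝ)^4 * J (p * p) := by ring

lemma J_def (p : ℝ[X]) : J p = ∫ x in (-1:ℝ)..1, p.eval x := rfl

/-- (squared) L² norm on [0,h] -/
noncomputable def nrm (h : ℝ) (p : ℝ[X]) : ℝ :=
  Real.sqrt (∫ s in (0:ℝ)..h, p.eval s ^ 2)

lemma integral_sq_nonneg (h : ℝ) (hh : 0 ≤ h) (p : ℝ[X]) :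
    0 ≤ ∫ s in (0:ℝ)..h, p.eval s ^ 2 :=
  intervalIntegral.integral_nonneg hh (fun u _ => sq_nonneg _)

lemma nrm_nonneg (h : ℝ) (p : ℝ[X]) : 0 ≤ nrm h p := Real.sqrt_nonneg _

lemma nrm_sq (h : ℝ) (hh : 0 ≤ h) (p : ℝ[X]) :
    nrm h p ^ 2 = ∫ s in (0:ℝ)..h, p.eval s ^ 2 :=
  Real.sq_sqrt (integral_sq_nonneg h hh p)

-- substitution
lemma J_comp (h : ℝ) (hh : 0 < h) (r : ℝ[X]) :
    J (r.comp (C (h/2) * X + C (h/2))) = (2/h) * ∫ s in (0:ℝ)..h, r.eval s := by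
  rw [J_def]
  have he : ∀ x : ℝ, (r.comp (C (h/2) * X + C (h/2))).eval x = r.eval ((h/2) * x + (h/2)) := by
    intro x; rw [eval_comp]; simp
  rw [intervalIntegral.integral_congr (g := fun x => r.eval ((h/2) * x + (h/2)))
    (fun x _ => he x)]
  rw [intervalIntegral.integral_comp_mul_add (fun y => r.eval y) (by positivity : h/2 ≠ 0) (h/2)]
  have h1 : h / 2 * (-1) + h / 2 = 0 := by ring
  have h2 : h / 2 * 1 + h / 2 = h := by ring
  rw [h1, h2, smul_eq_mul]
  congr 1
  field_simp

lemma inverse_scaled (h : ℝ) (hh : 0 < h) (n : ℕ) (p : ℝ[X]) (hp : p.natDegree ≤ n) :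
    nrm h (derivative p) ≤ (2 * Real.sqrt 3 * (n:ℝ)^2 / h) * nrm h p := by
  set lin : ℝ[X] := C (h/2) * X + C (h/2) with hlin
  set Q : ℝ[X] := p.comp lin with hQ
  have hQdeg : Q.natDegree ≤ n := by
    rw [hQ, natDegree_comp, hlin, natDegree_linear (by positivity : h/2 ≠ 0), mul_one]
    exact hp
  have hdQ : derivative Q = C (h/2) * (derivative p).comp lin := by
    rw [hQ, derivative_comp, hlin]
    congr 1
    simp
  have hQQ : Q * Q = (p * p).comp lin := by rw [mul_comp]
  have hdQdQ : derivative Q * derivative Q = C ((h/2)^2) * ((derivative p * derivative p).comp lin) := by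
    rw [hdQ, mul_comp]
    rw [show ((h/2)^2 : ℝ) = (h/2) * (h/2) from sq (h/2) ▸ rfl]
    rw [C_mul]
    ring
  have hIest := inv_est n Q hQdeg
  have hsq_int : ∀ q : ℝ[X], (∫ s in (0:ℝ)..h, (q * q).eval s) = ∫ s in (0:ℝ)..h, q.eval s ^ 2 := by
    intro q
    apply intervalIntegral.integral_congr
    intro x _
    simp [eval_mul, sq]
  have hL : J (derivative Q * derivative Q)
      = (h/2)^2 * ((2/h) * ∫ s in (0:ℝ)..h, (derivative p).eval s ^ 2) := by
    rw [hdQdQ, J_smul, J_comp h hh, hsq_int]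
  have hR : J (Q * Q) = (2/h) * ∫ s in (0:ℝ)..h, p.eval s ^ 2 := by
    rw [hQQ, J_comp h hh, hsq_int]
  rw [hL, hR] at hIest
  set A' := ∫ s in (0:ℝ)..h, (derivative p).eval s ^ 2 with hA'
  set A := ∫ s in (0:ℝ)..h, p.eval s ^ 2 with hA
  have hA'nonneg : 0 ≤ A' := integral_sq_nonneg h hh.le _
  have hAnonneg : 0 ≤ A := integral_sq_nonneg h hh.le _
  have hstep : A' ≤ 12 * (n:ℝ)^4 / h^2 * A := by
    have h2 : (0:ℝ) < h^2 := by positivity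
    have hne : h ≠ 0 := hh.ne'
    rw [div_mul_eq_mul_div, le_div_iff₀ h2]
    field_simp at hIest
    nlinarith [hIest, hh, sq_nonneg h]
  -- take square roots
  have hconst : (2 * Real.sqrt 3 * (n:ℝ)^2 / h) ^ 2 = 12 * (n:ℝ)^4 / h^2 := by
    rw [div_pow, mul_pow, mul_pow, Real.sq_sqrt (by norm_num : (3:ℝ) ≥ 0)]
    ring_nf
  have hcnonneg : 0 ≤ 2 * Real.sqrt 3 * (n:ℝ)^2 / h := by positivity
  rw [nrm, nrm, ← hA', ← hA]
  calc Real.sqrt A' ≤ Real.sqrt (12 * (n:ℝ)^4 / h^2 * A) := Real.sqrt_le_sqrt hstep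
    _ = Real.sqrt ((2 * Real.sqrt 3 * (n:ℝ)^2 / h) ^ 2 * A) := by rw [hconst]
    _ = (2 * Real.sqrt 3 * (n:ℝ)^2 / h) * Real.sqrt A := by
        rw [Real.sqrt_mul (by positivity) A, Real.sqrt_sq hcnonneg]

lemma div_trick {X A B : ℝ} (hA : 0 ≤ A) (hB : 0 ≤ B)
    (hX : ∀ ε : ℝ, 0 < ε → X ≤ (ε * A + B / ε) / 2) :
    X ≤ Real.sqrt A * Real.sqrt B := by
  have hXle0 : (∀ δ : ℝ, 0 < δ → X ≤ δ) → X ≤ 0 := by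
    intro hd
    by_contra hpos
    push_neg at hpos
    have := hd (X/2) (by linarith)
    linarith
  rcases eq_or_lt_of_le hA with hA0 | hA0
  · rcases eq_or_lt_of_le hB with hB0 | hB0
    · have := hX 1 one_pos
      rw [← hA0, ← hB0] at this
      simp at this
      rw [← hA0, ← hB0]
      simpa using this
    · have hX0 : X ≤ 0 := by
        apply hXle0
        intro δ hδ
        have := hX (B / (2 * δ)) (by positivity)
        rw [← hA0] at this
        have hBe : B / (B / (2 * δ)) = 2 * δ := by
          field_simp
        calc X ≤ (B / (2*δ) * 0 + B / (B / (2 * δ))) / 2 := this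
          _ = δ := by rw [hBe]; ring
      calc X ≤ 0 := hX0
        _ ≤ _ := by positivity
  · rcases eq_or_lt_of_le hB with hB0 | hB0
    · have hX0 : X ≤ 0 := by
        apply hXle0
        intro δ hδ
        have := hX (2 * δ / A) (by positivity)
        rw [← hB0] at this
        calc X ≤ (2 * δ / A * A + 0 / (2 * δ / A)) / 2 := this
          _ = δ := by field_simp; ring
      calc X ≤ 0 := hX0
        _ ≤ _ := by positivity
    · have hsA : Real.sqrt A > 0 := Real.sqrt_pos.mpr hA0
      have hsB : Real.sqrt B > 0 := Real.sqrt_pos.mpr hB0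
      have := hX (Real.sqrt B / Real.sqrt A) (by positivity)
      calc X ≤ (Real.sqrt B / Real.sqrt A * A + B / (Real.sqrt B / Real.sqrt A)) / 2 := this
        _ = Real.sqrt A * Real.sqrt B := by
            have e1 : Real.sqrt B / Real.sqrt A * A = Real.sqrt A * Real.sqrt B := by
              rw [div_mul_eq_mul_div, div_eq_iff hsA.ne']
              linear_combination (-Real.sqrt B) * Real.mul_self_sqrt hA
            have e2 : B / (Real.sqrt B / Real.sqrt A) = Real.sqrt A * Real.sqrt B := by
              rw [div_div_eq_mul_div, div_eq_iff hsB.ne']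
              linear_combination (-Real.sqrt A) * Real.mul_self_sqrt hB
            rw [e1, e2]
            ring

lemma ics (h : ℝ) (hh : 0 ≤ h) (r s : ℝ[X]) :
    (∫ t in (0:ℝ)..h, |r.eval t * s.eval t|) ≤ nrm h r * nrm h s := by
  apply div_trick (integral_sq_nonneg h hh r) (integral_sq_nonneg h hh s)
  intro ε hε
  have hpt : ∀ t ∈ Set.Icc (0:ℝ) h,
      |r.eval t * s.eval t| ≤ (ε * r.eval t ^ 2 + s.eval t ^ 2 / ε) / 2 := by
    intro t _
    rw [abs_mul]
    have key : 2 * ε * (|r.eval t| * |s.eval t|) ≤ ε^2 * r.eval t ^ 2 + s.eval t ^ 2 := by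
      nlinarith [sq_nonneg (ε * |r.eval t| - |s.eval t|), sq_abs (r.eval t), sq_abs (s.eval t)]
    rw [show (ε * r.eval t ^ 2 + s.eval t ^ 2 / ε) / 2 = (ε^2 * r.eval t ^2 + s.eval t ^2) / (2 * ε) from by field_simp]
    rw [le_div_iff₀ (by positivity)]
    linarith
  have hint1 : IntervalIntegrable (fun t => |r.eval t * s.eval t|) volume 0 h :=
    ((r.continuous.mul s.continuous).abs).intervalIntegrable 0 h
  have hint2 : IntervalIntegrable (fun t => (ε * r.eval t ^ 2 + s.eval t ^ 2 / ε) / 2) volume 0 h := by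
    apply Continuous.intervalIntegrable
    exact ((continuous_const.mul (r.continuous.pow 2)).add
      ((s.continuous.pow 2).div_const ε)).div_const 2
  calc (∫ t in (0:ℝ)..h, |r.eval t * s.eval t|)
      ≤ ∫ t in (0:ℝ)..h, (ε * r.eval t ^ 2 + s.eval t ^ 2 / ε) / 2 :=
        intervalIntegral.integral_mono_on hh hint1 hint2 hpt
    _ = (ε * (∫ t in (0:ℝ)..h, r.eval t ^ 2) + (∫ t in (0:ℝ)..h, s.eval t ^ 2) / ε) / 2 := by
        have e1 : (fun t => (ε * r.eval t ^ 2 + s.eval t ^ 2 / ε) / 2)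
            = fun t => (ε / 2) * r.eval t ^ 2 + (1 / (2 * ε)) * s.eval t ^ 2 := by
          funext t; field_simp
        rw [e1]
        rw [intervalIntegral.integral_add (f := fun t => (ε / 2) * r.eval t ^ 2)
          (g := fun t => (1 / (2 * ε)) * s.eval t ^ 2)
          ((continuous_const.mul (r.continuous.pow 2)).intervalIntegrable 0 h)
          ((continuous_const.mul (s.continuous.pow 2)).intervalIntegrable 0 h)]
        rw [intervalIntegral.integral_const_mul, intervalIntegral.integral_const_mul]
        field_simp

lemma two_dim_cs {a b d e : ℝ} (ha : 0 ≤ a) (hb : 0 ≤ b) (hd : 0 ≤ d) (he : 0 ≤ e) :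
    a * d + b * e ≤ Real.sqrt (a^2 + b^2) * Real.sqrt (d^2 + e^2) := by
  have h1 : (a * d + b * e)^2 ≤ (a^2 + b^2) * (d^2 + e^2) := by
    nlinarith [sq_nonneg (a * e - b * d)]
  have h2 : 0 ≤ a * d + b * e := by positivity
  calc a * d + b * e = Real.sqrt ((a * d + b * e)^2) := (Real.sqrt_sq h2).symm
    _ ≤ Real.sqrt ((a^2 + b^2) * (d^2 + e^2)) := Real.sqrt_le_sqrt h1
    _ = Real.sqrt (a^2 + b^2) * Real.sqrt (d^2 + e^2) := Real.sqrt_mul (by positivity) _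

lemma finset_cs {ι : Type*} (s : Finset ι) (x y : ι → ℝ)
    (hx : ∀ i ∈ s, 0 ≤ x i) (hy : ∀ i ∈ s, 0 ≤ y i) :
    ∑ i ∈ s, x i * y i ≤ Real.sqrt (∑ i ∈ s, x i ^ 2) * Real.sqrt (∑ i ∈ s, y i ^ 2) := by
  have h1 := Finset.sum_mul_sq_le_sq_mul_sq s x y
  have h2 : 0 ≤ ∑ i ∈ s, x i * y i :=
    Finset.sum_nonneg fun i hi => mul_nonneg (hx i hi) (hy i hi)
  calc ∑ i ∈ s, x i * y i = Real.sqrt ((∑ i ∈ s, x i * y i)^2) := (Real.sqrt_sq h2).symm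
    _ ≤ Real.sqrt ((∑ i ∈ s, x i ^ 2) * (∑ i ∈ s, y i ^ 2)) := Real.sqrt_le_sqrt h1
    _ = _ := Real.sqrt_mul (Finset.sum_nonneg fun i _ => sq_nonneg _) _

end VolBound

open VolBound

/-- Squared L² norm of a broken (piecewise polynomial) function on a periodic grid
of `N` elements each of width `h`, in local coordinates `s ∈ [0,h]`. -/
noncomputable def brokenNormSq (N : ℕ) [NeZero N] (h : ℝ)
    (p : ZMod N → Polynomial ℝ) : ℝ :=
  ∑ j : ZMod N, ∫ s in (0:ℝ)..h, (p j).eval s ^ 2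

/-- Bound on the volume term `Λ₁` in the proof of Theorem 1. -/
theorem nonstaggered_volume_term_bound
    (N : ℕ) [NeZero N] (hN : 1 ≤ N) (h c : ℝ) (hh : 0 < h) (hc : 0 < c)
    (qu qv : ℕ) (hqu : 1 ≤ qu) (α β τ : ℝ) (hβ : 0 ≤ β) (hτ : 0 ≤ τ)
    (w φ v ψ : ZMod N → Polynomial ℝ)
    (hw : ∀ j, (w j).natDegree ≤ qu - 1) (hφ : ∀ j, (φ j).natDegree ≤ qu - 1)
    (hv : ∀ j, (v j).natDegree ≤ qv) (hψ : ∀ j, (ψ j).natDegree ≤ qv)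
    (Λ₁ : ℝ)
    (hΛ₁ : Λ₁ = c ^ 2 * ∑ j : ZMod N, ∫ s in (0:ℝ)..h,
        (|(derivative (φ j)).eval s * (v j).eval s|
          + |(derivative (ψ j)).eval s * (w j).eval s|)) :
    Λ₁ ≤ 2 * Real.sqrt 3 * (c / h) * max (((qu : ℝ) - 1) ^ 2) ((qv : ℝ) ^ 2)
        * Real.sqrt (c ^ 2 * brokenNormSq N h w + brokenNormSq N h v)
        * Real.sqrt (c ^ 2 * brokenNormSq N h φ + brokenNormSq N h ψ) := by
  set M : ℝ := max (((qu : ℝ) - 1) ^ 2) ((qv : ℝ) ^ 2) with hM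
  have hM0 : 0 ≤ M := le_trans (sq_nonneg _) (le_max_right _ _)
  have hqu_cast : (((qu - 1 : ℕ)) : ℝ) = (qu : ℝ) - 1 := by
    push_cast [Nat.cast_sub hqu]
    ring
  have hquM : (((qu - 1 : ℕ)) : ℝ) ^ 2 ≤ M := by
    rw [hqu_cast]; exact le_max_left _ _
  have hqvM : ((qv : ℕ) : ℝ) ^ 2 ≤ M := le_max_right _ _
  -- per element bound
  have elem : ∀ (r s : ℝ[X]) (n : ℕ), r.natDegree ≤ n → ((n:ℝ)^2 ≤ M) →
      (∫ t in (0:ℝ)..h, |(derivative r).eval t * s.eval t|)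
        ≤ 2 * Real.sqrt 3 / h * M * (nrm h r * nrm h s) := by
    intro r s n hr hnM
    calc (∫ t in (0:ℝ)..h, |(derivative r).eval t * s.eval t|)
        ≤ nrm h (derivative r) * nrm h s := ics h hh.le (derivative r) s
      _ ≤ ((2 * Real.sqrt 3 * (n:ℝ)^2 / h) * nrm h r) * nrm h s :=
          mul_le_mul_of_nonneg_right (inverse_scaled h hh n r hr) (nrm_nonneg h s)
      _ ≤ 2 * Real.sqrt 3 / h * M * (nrm h r * nrm h s) := by
          have hfac : 2 * Real.sqrt 3 * (n:ℝ)^2 / h ≤ 2 * Real.sqrt 3 / h * M := by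
            rw [div_mul_eq_mul_div, div_le_div_iff₀ hh hh]
            have key := mul_le_mul_of_nonneg_left hnM
              (mul_nonneg (by positivity : (0:ℝ) ≤ 2 * Real.sqrt 3) hh.le)
            nlinarith [key]
          have hnn : 0 ≤ nrm h r * nrm h s :=
            mul_nonneg (nrm_nonneg h r) (nrm_nonneg h s)
          calc ((2 * Real.sqrt 3 * (n:ℝ)^2 / h) * nrm h r) * nrm h s
              = (2 * Real.sqrt 3 * (n:ℝ)^2 / h) * (nrm h r * nrm h s) := by ring
            _ ≤ 2 * Real.sqrt 3 / h * M * (nrm h r * nrm h s) :=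
                mul_le_mul_of_nonneg_right hfac hnn
  -- split the integral per element
  have split : ∀ j : ZMod N, (∫ s in (0:ℝ)..h,
        (|(derivative (φ j)).eval s * (v j).eval s|
          + |(derivative (ψ j)).eval s * (w j).eval s|))
      = (∫ t in (0:ℝ)..h, |(derivative (φ j)).eval t * (v j).eval t|)
        + ∫ t in (0:ℝ)..h, |(derivative (ψ j)).eval t * (w j).eval t| := by
    intro j
    exact intervalIntegral.integral_add
      ((((derivative (φ j)).continuous.mul (v j).continuous).abs).intervalIntegrable 0 h)
      ((((derivative (ψ j)).continuous.mul (w j).continuous).abs).intervalIntegrable 0 h)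
  -- per-element combined bound
  have perj : ∀ j : ZMod N, (∫ s in (0:ℝ)..h,
        (|(derivative (φ j)).eval s * (v j).eval s|
          + |(derivative (ψ j)).eval s * (w j).eval s|))
      ≤ 2 * Real.sqrt 3 / h * M *
          (nrm h (φ j) * nrm h (v j) + nrm h (ψ j) * nrm h (w j)) := by
    intro j
    rw [split j]
    have h1 := elem (φ j) (v j) (qu - 1) (hφ j) hquM
    have h2 := elem (ψ j) (w j) qv (hψ j) hqvM
    calc _ ≤ 2 * Real.sqrt 3 / h * M * (nrm h (φ j) * nrm h (v j))
            + 2 * Real.sqrt 3 / h * M * (nrm h (ψ j) * nrm h (w j)) := add_le_add h1 h2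
      _ = 2 * Real.sqrt 3 / h * M *
            (nrm h (φ j) * nrm h (v j) + nrm h (ψ j) * nrm h (w j)) := by ring
  -- Cauchy–Schwarz over elements
  set x : ZMod N → ℝ := fun j => Real.sqrt (c^2 * nrm h (φ j)^2 + nrm h (ψ j)^2) with hx
  set y : ZMod N → ℝ := fun j => Real.sqrt (nrm h (v j)^2 + c^2 * nrm h (w j)^2) with hy
  have hxyj : ∀ j : ZMod N,
      c * (nrm h (φ j) * nrm h (v j) + nrm h (ψ j) * nrm h (w j)) ≤ x j * y j := by
    intro j
    have := two_dim_cs (mul_nonneg hc.le (nrm_nonneg h (φ j))) (nrm_nonneg h (ψ j))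
      (nrm_nonneg h (v j)) (mul_nonneg hc.le (nrm_nonneg h (w j)))
    calc c * (nrm h (φ j) * nrm h (v j) + nrm h (ψ j) * nrm h (w j))
        = (c * nrm h (φ j)) * nrm h (v j) + nrm h (ψ j) * (c * nrm h (w j)) := by ring
      _ ≤ Real.sqrt ((c * nrm h (φ j))^2 + nrm h (ψ j)^2)
            * Real.sqrt (nrm h (v j)^2 + (c * nrm h (w j))^2) := this
      _ = x j * y j := by rw [hx, hy, mul_pow, mul_pow]
  have hsum_cs : ∑ j : ZMod N, x j * y j
      ≤ Real.sqrt (∑ j : ZMod N, (x j)^2) * Real.sqrt (∑ j : ZMod N, (y j)^2) :=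
    finset_cs Finset.univ x y (fun j _ => Real.sqrt_nonneg _) (fun j _ => Real.sqrt_nonneg _)
  have hxsq : ∑ j : ZMod N, (x j)^2 = c^2 * brokenNormSq N h φ + brokenNormSq N h ψ := by
    have : ∀ j : ZMod N, (x j)^2 = c^2 * (∫ s in (0:ℝ)..h, (φ j).eval s ^2)
        + ∫ s in (0:ℝ)..h, (ψ j).eval s ^2 := by
      intro j
      rw [hx]
      have h1 : (0:ℝ) ≤ c^2 * nrm h (φ j)^2 + nrm h (ψ j)^2 := by positivity
      rw [Real.sq_sqrt h1, nrm_sq h hh.le, nrm_sq h hh.le]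
    rw [Finset.sum_congr rfl (fun j _ => this j), Finset.sum_add_distrib, ← Finset.mul_sum]
    rfl
  have hysq : ∑ j : ZMod N, (y j)^2 = brokenNormSq N h v + c^2 * brokenNormSq N h w := by
    have : ∀ j : ZMod N, (y j)^2 = (∫ s in (0:ℝ)..h, (v j).eval s ^2)
        + c^2 * ∫ s in (0:ℝ)..h, (w j).eval s ^2 := by
      intro j
      rw [hy]
      have h1 : (0:ℝ) ≤ nrm h (v j)^2 + c^2 * nrm h (w j)^2 := by positivity
      rw [Real.sq_sqrt h1, nrm_sq h hh.le, nrm_sq h hh.le]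
    rw [Finset.sum_congr rfl (fun j _ => this j), Finset.sum_add_distrib, ← Finset.mul_sum]
    rfl
  -- put everything together
  set S : ℝ := ∑ j : ZMod N, (nrm h (φ j) * nrm h (v j) + nrm h (ψ j) * nrm h (w j)) with hS
  have hΛ₁S : Λ₁ ≤ c^2 * (2 * Real.sqrt 3 / h * M * S) := by
    rw [hΛ₁, hS]
    have hsum : ∑ j : ZMod N, (∫ s in (0:ℝ)..h,
          (|(derivative (φ j)).eval s * (v j).eval s|
            + |(derivative (ψ j)).eval s * (w j).eval s|))
        ≤ ∑ j : ZMod N, 2 * Real.sqrt 3 / h * M *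
            (nrm h (φ j) * nrm h (v j) + nrm h (ψ j) * nrm h (w j)) :=
      Finset.sum_le_sum (fun j _ => perj j)
    rw [← Finset.mul_sum] at hsum
    have hc2 : (0:ℝ) ≤ c^2 := sq_nonneg c
    exact mul_le_mul_of_nonneg_left hsum hc2
  have hcS : c * S ≤ Real.sqrt (c^2 * brokenNormSq N h w + brokenNormSq N h v)
      * Real.sqrt (c^2 * brokenNormSq N h φ + brokenNormSq N h ψ) := by
    have h1 : c * S = ∑ j : ZMod N,
        c * (nrm h (φ j) * nrm h (v j) + nrm h (ψ j) * nrm h (w j)) := by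
      rw [hS, Finset.mul_sum]
    have h2 : ∑ j : ZMod N,
        c * (nrm h (φ j) * nrm h (v j) + nrm h (ψ j) * nrm h (w j))
        ≤ ∑ j : ZMod N, x j * y j := Finset.sum_le_sum (fun j _ => hxyj j)
    rw [h1]
    calc _ ≤ ∑ j : ZMod N, x j * y j := h2
      _ ≤ Real.sqrt (∑ j : ZMod N, (x j)^2) * Real.sqrt (∑ j : ZMod N, (y j)^2) := hsum_cs
      _ = _ := by
          rw [hxsq, hysq, add_comm (brokenNormSq N h v) (c^2 * brokenNormSq N h w)]
          ring
  have hKpos : (0:ℝ) ≤ 2 * Real.sqrt 3 / h * M * c := by positivity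
  calc Λ₁ ≤ c^2 * (2 * Real.sqrt 3 / h * M * S) := hΛ₁S
    _ = (2 * Real.sqrt 3 / h * M * c) * (c * S) := by ring
    _ ≤ (2 * Real.sqrt 3 / h * M * c) *
          (Real.sqrt (c^2 * brokenNormSq N h w + brokenNormSq N h v)
            * Real.sqrt (c^2 * brokenNormSq N h φ + brokenNormSq N h ψ)) :=
        mul_le_mul_of_nonneg_left hcS hKpos
    _ = 2 * Real.sqrt 3 * (c / h) * M
          * Real.sqrt (c ^ 2 * brokenNormSq N h w + brokenNormSq N h v)
          * Real.sqrt (c ^ 2 * brokenNormSq N h φ + brokenNormSq N h ψ) := by ring
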